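/- arXiv:0806.3033 — 7 statements merged into one kernel-verified Lean document; each statement's English description precedes it below -/
import Mathlib

section
/- Suppose F : ℕ → ℕ ∪ {*} satisfies F(0)=F(1)=F(2)=F(3)=* and for n ≥ 4, F(n) = mex({F(n-2), F(n-3)} ∪ {F(i) ⊕ F(j) : j ≥ i ≥ 1, i + j = n-3}), where x ⊕ * = * ⊕ x = * and ⊕ is Nim-sum on naturals, and mex ignores * values. If for some p > 0 and q > 0 we have F(n+p) = F(n) for all n with q ≤ n ≤ 2q + p + 2, then F(n+p) = F(n) for all n ≥ q. -/
/-- Minimum excluded value of a set of naturals. -/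
noncomputable def mex (S : Set ℕ) : ℕ := sInf {m | m ∉ S}

/-- Nim-sum extended to `Option ℕ`, where `none` plays the role of the
undefined value `*`: `x ⊕ * = * ⊕ x = *`. -/
def oxor : Option ℕ → Option ℕ → Option ℕ
  | some a, some b => some (a ^^^ b)
  | _, _ => none

/-- The values (possibly undefined) of the options of the path `P n` (`n ≥ 4`) for the
function `F`: the values of `P (n-2)`, `P (n-3)` and of the unions `P i ∪ P j`. -/
def optionValues (F : ℕ → Option ℕ) (n : ℕ) : Set (Option ℕ) :=
  {F (n - 2), F (n - 3)} ∪
    {v | ∃ i j : ℕ, 1 ≤ i ∧ i ≤ j ∧ i + j = n - 3 ∧ v = oxor (F i) (F j)}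

/-- `mex` of a set of possibly-undefined values, ignoring the undefined ones. -/
noncomputable def mexO (S : Set (Option ℕ)) : ℕ := mex {m | some m ∈ S}


/-
The options of `P n` only involve values of `F` below `n`. Past the window, `n > 2q + p + 2`,
the larger part `j` of any splitting `i + j = n + p - 3` (`i ≤ j`) satisfies `j ≥ q + p`, so
replacing `j` by `j - p` (and conversely `j` by `j + p` for splittings of `n - 3`) matches the
options of `P (n + p)` with those of `P n` as soon as `F` is `p`-periodic on `[q, n)`. Strong
induction on `n` then propagates the periodicity from the window to all `n ≥ q`.
-/

lemma oxor_comm (a b : Option ℕ) : oxor a b = oxor b a := by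
  cases a <;> cases b <;> simp [oxor, Nat.xor_comm]

def splitValues (F : ℕ → Option ℕ) (s : ℕ) : Set (Option ℕ) :=
  {v | ∃ i j : ℕ, 1 ≤ i ∧ i ≤ j ∧ i + j = s ∧ v = oxor (F i) (F j)}

lemma optionValues_eq_union_splitValues (F : ℕ → Option ℕ) (n : ℕ) :
    optionValues F n = {F (n - 2), F (n - 3)} ∪ splitValues F (n - 3) :=
  rfl

section Periodic

variable {F : ℕ → Option ℕ} {p q : ℕ}

lemma splitValues_add_period {s : ℕ} (hq : 0 < q) (hs : 2 * q + p ≤ s)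
    (hper : ∀ m, q ≤ m → m < s → F (m + p) = F m) :
    splitValues F (s + p) = splitValues F s := by
  ext v
  constructor
  · rintro ⟨i, j, hi, hij, hsum, rfl⟩
    have hFj : F j = F (j - p) := by
      simpa [Nat.sub_add_cancel (by omega : p ≤ j)] using hper (j - p) (by omega) (by omega)
    rw [hFj]
    by_cases hc : i ≤ j - p
    · exact ⟨i, j - p, hi, hc, by omega, rfl⟩
    · exact ⟨j - p, i, by omega, by omega, by omega, oxor_comm _ _⟩
  · rintro ⟨i, j, hi, hij, hsum, rfl⟩
    exact ⟨i, j + p, hi, by omega, by omega, by rw [hper j (by omega) (by omega)]⟩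

lemma optionValues_add_period {n : ℕ} (hq : 0 < q) (hn : 2 * q + p + 3 ≤ n)
    (hper : ∀ m, q ≤ m → m < n → F (m + p) = F m) :
    optionValues F (n + p) = optionValues F n := by
  have hshift (k : ℕ) (hk₁ : 1 ≤ k) (hk₃ : k ≤ 3) : F (n + p - k) = F (n - k) := by
    rw [show n + p - k = n - k + p by omega]
    exact hper (n - k) (by omega) (by omega)
  rw [optionValues_eq_union_splitValues, optionValues_eq_union_splitValues,
    hshift 2 (by omega) (by omega), hshift 3 (by omega) (by omega),
    show n + p - 3 = n - 3 + p by omega,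
    splitValues_add_period hq (by omega) fun m hm hm' => hper m hm (by omega)]

end Periodic

theorem foreclosed_grundy_periodicity_general (F : ℕ → Option ℕ)
    (hrec : ∀ n, 4 ≤ n → F n = some (mexO (optionValues F n)))
    (p q : ℕ) (hq : 0 < q)
    (hper : ∀ n, q ≤ n → n ≤ 2 * q + p + 2 → F (n + p) = F n) :
    ∀ n, q ≤ n → F (n + p) = F n := by
  intro n
  induction n using Nat.strong_induction_on with
  | _ n IH =>
  intro hqn
  by_cases hwindow : n ≤ 2 * q + p + 2
  · exact hper n hqn hwindow
  · rw [hrec n (by omega), hrec (n + p) (by omega),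
      optionValues_add_period hq (by omega) fun m hm hmn => IH m hmn hm]

theorem foreclosed_grundy_periodicity (F : ℕ → Option ℕ)
    (h0 : F 0 = none) (h1 : F 1 = none) (h2 : F 2 = none) (h3 : F 3 = none)
    (hrec : ∀ n, 4 ≤ n → F n = some (mexO (optionValues F n)))
    (p q : ℕ) (hp : 0 < p) (hq : 0 < q)
    (hper : ∀ n, q ≤ n → n ≤ 2 * q + p + 2 → F (n + p) = F n) :
    ∀ n, q ≤ n → F (n + p) = F n :=
  foreclosed_grundy_periodicity_general F hrec p q hq hper
end

section
/- Let R : ℕ → ℕ be defined by R(0) = 0 and, for n ≥ 1, R(n) = 1 + min{even values among remotenesses of options of P_n} if some option has even remoteness, and R(n) = 1 + max{odd values among remotenesses of options of P_n} otherwise, where the remoteness of a disjoint union of paths is computed with the same rules from its own options (a move in a union plays in every component simultaneously and the game ends when any component ends). Then R(1)=R(2)=R(3)=1, R(4)=R(5)=2, R(6)=R(7)=R(8)=3, R(9)=R(10)=4, and R(n)=3 for all n ≥ 11. -/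
/-- The options of a single path `P n` in Node-Kayles, each given as a multiset of
resulting path lengths.  A resulting empty path is recorded as `0`, which marks an
ended component.  `P 1` and `P 2` only move to the (ended) empty path. -/
def pathOptions (n : ℕ) : Set (Multiset ℕ) :=
  if n = 0 then ∅
  else if n ≤ 2 then {({0} : Multiset ℕ)}
  else {({n - 2} : Multiset ℕ), ({n - 3} : Multiset ℕ)} ∪
    {m | ∃ i j : ℕ, 1 ≤ i ∧ i ≤ j ∧ i + j = n - 3 ∧ m = ({i, j} : Multiset ℕ)}

/-- A conjunctive move: play one Node-Kayles move simultaneously in every component. -/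
inductive ConjMove : Multiset ℕ → Multiset ℕ → Prop
  | single {n : ℕ} {h : Multiset ℕ} : h ∈ pathOptions n → ConjMove {n} h
  | cons {n : ℕ} {h G H : Multiset ℕ} :
      h ∈ pathOptions n → ConjMove G H → ConjMove (n ::ₘ G) (h + H)

/-- A position is ended (for the short ending rule) when it is empty or
some component has ended. -/
def Ended (G : Multiset ℕ) : Prop := G = 0 ∨ 0 ∈ G

/-! The remoteness of a conjunctive compound is the least remoteness of its components. So
guess `pathRemoteness` on single paths and the minimum over the components on compounds, and
check that this guess satisfies, move by move, the parity constraints of the recursion: a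
constraint that holds in every component survives taking minima, and a move lowering the value
by exactly one exists in every component. The recursion has a unique solution, by well-founded
induction on the total length, so `R` is this guess. -/

/-- What the remoteness recursion requires between the remoteness `x` of a position and the
remoteness `y` of one of its options. -/
def RemotenessStep (x y : ℕ) : Prop :=
  (Even y → Odd x ∧ x ≤ y + 1) ∧ (Even x → Odd y ∧ y + 1 ≤ x)

lemma remotenessStep_iff_mod_two {x y : ℕ} : RemotenessStep x y ↔
    (y % 2 = 0 → x % 2 = 1 ∧ x ≤ y + 1) ∧ (x % 2 = 0 → y % 2 = 1 ∧ y + 1 ≤ x) := by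
  simp only [RemotenessStep, Nat.even_iff, Nat.odd_iff]

lemma remotenessStep_one (y : ℕ) : RemotenessStep 1 y := by
  rw [remotenessStep_iff_mod_two]; omega

lemma remotenessStep_three {y : ℕ} (hy : 1 ≤ y) : RemotenessStep 3 y := by
  rw [remotenessStep_iff_mod_two]; omega

lemma remotenessStep_one_right {x : ℕ} (hx : 1 ≤ x) : RemotenessStep x 1 := by
  rw [remotenessStep_iff_mod_two]; omega

lemma RemotenessStep.min {a a' b b' : ℕ} (ha : RemotenessStep a a') (hb : RemotenessStep b b') :
    RemotenessStep (min a b) (min a' b') := by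
  rw [remotenessStep_iff_mod_two] at *; omega

section Remoteness

variable {α : Type*} (End : α → Prop) (Move : α → α → Prop)

structure IsRemoteness (R : α → ℕ) : Prop where
  of_end : ∀ G, End G → R G = 0
  of_exists_even : ∀ G, ¬ End G → (∃ H, Move G H ∧ Even (R H)) →
    R G = 1 + sInf {r | Even r ∧ ∃ H, Move G H ∧ R H = r}
  of_not_exists_even : ∀ G, ¬ End G → ¬ (∃ H, Move G H ∧ Even (R H)) →
    R G = 1 + sSup {r | Odd r ∧ ∃ H, Move G H ∧ R H = r}

structure IsRemotenessCertificate (f : α → ℕ) : Prop where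
  of_end : ∀ G, End G → f G = 0
  step : ∀ G H, ¬ End G → Move G H → RemotenessStep (f G) (f H)
  exists_pred : ∀ G, ¬ End G → ∃ H, Move G H ∧ f H + 1 = f G

variable {End Move}

theorem IsRemoteness.eq_of_certificate {R f : α → ℕ} (hR : IsRemoteness End Move R)
    (hwf : WellFounded fun H G => Move G H ∧ ¬ End G) (hf : IsRemotenessCertificate End Move f) :
    R = f := by
  funext G
  induction G using hwf.induction with
  | _ G ih =>
  by_cases hG : End G
  · rw [hR.of_end G hG, hf.of_end G hG]
  have hopt : ∀ H, Move G H → R H = f H := fun H hH => ih H ⟨hH, hG⟩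
  obtain ⟨H₀, hH₀, hfH₀⟩ := hf.exists_pred G hG
  rcases Nat.even_or_odd (f G) with heG | hoG
  · have hnone : ¬ ∃ H, Move G H ∧ Even (R H) := by
      rintro ⟨H, hH, he⟩
      rw [hopt H hH] at he
      exact Nat.not_odd_iff_even.2 he ((hf.step G H hG hH).2 heG).1
    have hmax : IsGreatest {r | Odd r ∧ ∃ H, Move G H ∧ R H = r} (f H₀) := by
      refine ⟨⟨((hf.step G H₀ hG hH₀).2 heG).1, H₀, hH₀, hopt H₀ hH₀⟩, ?_⟩
      rintro _ ⟨-, H, hH, rfl⟩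
      have := ((hf.step G H hG hH).2 heG).2
      rw [hopt H hH]; omega
    rw [hR.of_not_exists_even G hG hnone, hmax.csSup_eq]; omega
  · have heH₀ : Even (f H₀) := by
      rw [← hfH₀] at hoG; exact Nat.not_odd_iff_even.1 (Nat.odd_add_one.1 hoG)
    have hmin : IsLeast {r | Even r ∧ ∃ H, Move G H ∧ R H = r} (f H₀) := by
      refine ⟨⟨heH₀, H₀, hH₀, hopt H₀ hH₀⟩, ?_⟩
      rintro _ ⟨he, H, hH, rfl⟩
      rw [hopt H hH] at he ⊢
      have := ((hf.step G H hG hH).1 he).2; omega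
    rw [hR.of_exists_even G hG ⟨H₀, hH₀, hopt H₀ hH₀ ▸ heH₀⟩, hmin.csInf_eq]; omega

end Remoteness

def pathRemoteness (n : ℕ) : ℕ :=
  if n = 0 then 0 else if n ≤ 3 then 1 else if n ≤ 5 then 2
  else if n ≤ 8 then 3 else if n ≤ 10 then 4 else 3

lemma pathRemoteness_le_four (n : ℕ) : pathRemoteness n ≤ 4 := by
  unfold pathRemoteness; split_ifs <;> omega

lemma one_le_pathRemoteness {n : ℕ} (hn : 1 ≤ n) : 1 ≤ pathRemoteness n := by
  unfold pathRemoteness; split_ifs <;> omega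

lemma pathRemoteness_of_le_three {n : ℕ} (h1 : 1 ≤ n) (h3 : n ≤ 3) : pathRemoteness n = 1 := by
  unfold pathRemoteness; split_ifs <;> omega

lemma pathRemoteness_of_eleven_le {n : ℕ} (hn : 11 ≤ n) : pathRemoteness n = 3 := by
  unfold pathRemoteness; split_ifs <;> omega

/-- The start value `4` bounds `pathRemoteness`, so it is neutral for `min` on nonempty
compounds. -/
def minPathRemoteness (G : Multiset ℕ) : ℕ := (G.map pathRemoteness).fold min 4

lemma minPathRemoteness_cons (a : ℕ) (G : Multiset ℕ) :
    minPathRemoteness (a ::ₘ G) = min (pathRemoteness a) (minPathRemoteness G) := by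
  simp only [minPathRemoteness, Multiset.map_cons, Multiset.fold_cons_left]

lemma minPathRemoteness_add (G H : Multiset ℕ) :
    minPathRemoteness (G + H) = min (minPathRemoteness G) (minPathRemoteness H) := by
  simp only [minPathRemoteness, Multiset.map_add, ← Multiset.fold_add, min_self]

lemma minPathRemoteness_singleton (a : ℕ) : minPathRemoteness {a} = pathRemoteness a := by
  rw [minPathRemoteness, Multiset.map_singleton, Multiset.fold_singleton,
    min_eq_left (pathRemoteness_le_four a)]

lemma minPathRemoteness_pair (a b : ℕ) :
    minPathRemoteness {a, b} = min (pathRemoteness a) (pathRemoteness b) := by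
  rw [Multiset.insert_eq_cons, minPathRemoteness_cons, minPathRemoteness_singleton]

lemma minPathRemoteness_of_zero_mem {G : Multiset ℕ} (h0 : 0 ∈ G) : minPathRemoteness G = 0 := by
  obtain ⟨G', rfl⟩ := Multiset.exists_cons_of_mem h0
  simp [minPathRemoteness_cons, pathRemoteness]

def compoundRemoteness (G : Multiset ℕ) : ℕ := if G = 0 then 0 else minPathRemoteness G

lemma compoundRemoteness_of_ne_zero {G : Multiset ℕ} (hG : G ≠ 0) :
    compoundRemoteness G = minPathRemoteness G := if_neg hG

lemma compoundRemoteness_singleton (n : ℕ) : compoundRemoteness {n} = pathRemoteness n := by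
  rw [compoundRemoteness_of_ne_zero (Multiset.singleton_ne_zero n), minPathRemoteness_singleton]

lemma pathOptions_of_le_two {n : ℕ} (h1 : 1 ≤ n) (h2 : n ≤ 2) : pathOptions n = {{0}} := by
  rw [pathOptions, if_neg (by omega), if_pos h2]

lemma mem_pathOptions_of_three_le {n : ℕ} {h : Multiset ℕ} (h3 : 3 ≤ n) :
    h ∈ pathOptions n ↔ h = {n - 2} ∨ h = {n - 3} ∨
      ∃ i j : ℕ, 1 ≤ i ∧ i ≤ j ∧ i + j = n - 3 ∧ h = {i, j} := by
  rw [pathOptions, if_neg (by omega), if_neg (by omega)]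
  simp only [Set.mem_union, Set.mem_insert_iff, Set.mem_singleton_iff, Set.mem_ofPred_eq, or_assoc]

lemma ne_zero_of_mem_pathOptions {n : ℕ} {h : Multiset ℕ} (hh : h ∈ pathOptions n) : h ≠ 0 := by
  rcases Nat.lt_or_ge n 3 with h3 | h3
  · rcases Nat.eq_zero_or_pos n with rfl | hn
    · simp [pathOptions] at hh
    · rw [pathOptions_of_le_two hn (by omega), Set.mem_singleton_iff] at hh
      exact hh ▸ Multiset.singleton_ne_zero 0
  · rcases (mem_pathOptions_of_three_le h3).1 hh with rfl | rfl | ⟨i, j, -, -, -, rfl⟩ <;>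
      exact Multiset.cons_ne_zero

lemma sum_lt_of_mem_pathOptions {n : ℕ} {h : Multiset ℕ} (hn : 1 ≤ n) (hh : h ∈ pathOptions n) :
    h.sum < n := by
  rcases Nat.lt_or_ge n 3 with h3 | h3
  · rw [pathOptions_of_le_two hn (by omega), Set.mem_singleton_iff] at hh
    simp only [hh, Multiset.sum_singleton]; omega
  · rcases (mem_pathOptions_of_three_le h3).1 hh with rfl | rfl | ⟨i, j, -, -, hs, rfl⟩ <;>
      simp only [Multiset.sum_singleton, Multiset.insert_eq_cons, Multiset.sum_cons] <;> omega

lemma remotenessStep_of_mem_pathOptions {n : ℕ} {h : Multiset ℕ} (hn : 1 ≤ n)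
    (hh : h ∈ pathOptions n) : RemotenessStep (pathRemoteness n) (minPathRemoteness h) := by
  rcases Nat.lt_or_ge n 3 with h3 | h3
  · rw [pathRemoteness_of_le_three hn (by omega)]; exact remotenessStep_one _
  rcases Nat.lt_or_ge n 11 with h11 | h11
  · rcases (mem_pathOptions_of_three_le h3).1 hh with rfl | rfl | ⟨i, j, hi, hij, hs, rfl⟩
    · rw [minPathRemoteness_singleton, remotenessStep_iff_mod_two]
      interval_cases n <;> decide
    · rw [minPathRemoteness_singleton, remotenessStep_iff_mod_two]
      interval_cases n <;> decide
    · -- the smaller part has length at most 3, hence remoteness 1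
      rw [minPathRemoteness_pair, pathRemoteness_of_le_three hi (by omega),
        min_eq_left (one_le_pathRemoteness (by omega))]
      exact remotenessStep_one_right (one_le_pathRemoteness hn)
  · rw [pathRemoteness_of_eleven_le h11]
    apply remotenessStep_three
    rcases (mem_pathOptions_of_three_le h3).1 hh with rfl | rfl | ⟨i, j, hi, hij, hs, rfl⟩
    · rw [minPathRemoteness_singleton]; exact (one_le_pathRemoteness (by omega))
    · rw [minPathRemoteness_singleton]; exact (one_le_pathRemoteness (by omega))
    · rw [minPathRemoteness_pair]
      exact (le_min (one_le_pathRemoteness hi) (one_le_pathRemoteness (by omega)))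

lemma exists_mem_pathOptions_succ_eq {n : ℕ} (hn : 1 ≤ n) :
    ∃ h ∈ pathOptions n, minPathRemoteness h + 1 = pathRemoteness n := by
  rcases Nat.lt_or_ge n 3 with h3 | h3
  · refine ⟨{0}, by rw [pathOptions_of_le_two hn (by omega)]; rfl, ?_⟩
    rw [minPathRemoteness_singleton, pathRemoteness_of_le_three hn (by omega)]; rfl
  rcases Nat.lt_or_ge n 11 with h11 | h11
  · have : pathRemoteness (n - 2) + 1 = pathRemoteness n ∨
        pathRemoteness (n - 3) + 1 = pathRemoteness n := by
      interval_cases n <;> decide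
    rcases this with h | h
    · exact ⟨{n - 2}, (mem_pathOptions_of_three_le h3).2 (Or.inl rfl),
        by rwa [minPathRemoteness_singleton]⟩
    · exact ⟨{n - 3}, (mem_pathOptions_of_three_le h3).2 (Or.inr (Or.inl rfl)),
        by rwa [minPathRemoteness_singleton]⟩
  · -- `P 4 ∪ P (n - 7)` has remoteness `min 2 (≥ 2) = 2`
    refine ⟨{4, n - 7}, (mem_pathOptions_of_three_le h3).2
      (Or.inr (Or.inr ⟨4, n - 7, by omega, by omega, by omega, rfl⟩)), ?_⟩
    have h4 : pathRemoteness 4 = 2 := rfl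
    have : 2 ≤ pathRemoteness (n - 7) := by unfold pathRemoteness; split_ifs <;> omega
    rw [minPathRemoteness_pair, pathRemoteness_of_eleven_le h11]; omega

lemma not_ended_iff {G : Multiset ℕ} : ¬ Ended G ↔ G ≠ 0 ∧ 0 ∉ G := not_or

namespace ConjMove

variable {G H : Multiset ℕ}

lemma ne_zero_left (hGH : ConjMove G H) : G ≠ 0 := by
  cases hGH <;> exact Multiset.cons_ne_zero

lemma ne_zero_right (hGH : ConjMove G H) : H ≠ 0 := by
  cases hGH with
  | single hh => exact ne_zero_of_mem_pathOptions hh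
  | cons hh _ => exact add_ne_zero'.mpr (Or.inl (ne_zero_of_mem_pathOptions hh))

lemma sum_lt (hGH : ConjMove G H) (h0 : 0 ∉ G) : H.sum < G.sum := by
  induction hGH with
  | @single n h hh =>
    simpa using sum_lt_of_mem_pathOptions (Nat.pos_of_ne_zero (by simpa [eq_comm] using h0)) hh
  | @cons n h G H hh _ ih =>
    rw [Multiset.mem_cons, not_or] at h0
    have := sum_lt_of_mem_pathOptions (Nat.pos_of_ne_zero (Ne.symm h0.1)) hh
    rw [Multiset.sum_cons, Multiset.sum_add]
    have := ih h0.2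
    omega

lemma remotenessStep (hGH : ConjMove G H) (h0 : 0 ∉ G) :
    RemotenessStep (minPathRemoteness G) (minPathRemoteness H) := by
  induction hGH with
  | @single n h hh =>
    rw [minPathRemoteness_singleton]
    exact remotenessStep_of_mem_pathOptions (Nat.pos_of_ne_zero (by simpa [eq_comm] using h0)) hh
  | @cons n h G H hh _ ih =>
    rw [Multiset.mem_cons, not_or] at h0
    rw [minPathRemoteness_cons, minPathRemoteness_add]
    exact (remotenessStep_of_mem_pathOptions (Nat.pos_of_ne_zero (Ne.symm h0.1)) hh).min (ih h0.2)

end ConjMove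

lemma exists_conjMove_succ_eq {G : Multiset ℕ} (hG : G ≠ 0) (h0 : 0 ∉ G) :
    ∃ H, ConjMove G H ∧ minPathRemoteness H + 1 = minPathRemoteness G := by
  induction G using Multiset.induction with
  | empty => exact absurd rfl hG
  | cons a G ih =>
    rw [Multiset.mem_cons, not_or] at h0
    obtain ⟨h, hh, hfh⟩ := exists_mem_pathOptions_succ_eq (Nat.pos_of_ne_zero (Ne.symm h0.1))
    rcases eq_or_ne G 0 with rfl | hG'
    · exact ⟨h, ConjMove.single hh, by rwa [Multiset.cons_zero, minPathRemoteness_singleton]⟩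
    · obtain ⟨H, hGH, hfH⟩ := ih hG' h0.2
      refine ⟨h + H, ConjMove.cons hh hGH, ?_⟩
      rw [minPathRemoteness_add, minPathRemoteness_cons]
      omega

lemma isRemotenessCertificate_compoundRemoteness :
    IsRemotenessCertificate Ended ConjMove compoundRemoteness where
  of_end G hG := by
    rcases hG with rfl | h0
    · rfl
    · rw [compoundRemoteness_of_ne_zero (by rintro rfl; exact Multiset.notMem_zero 0 h0),
        minPathRemoteness_of_zero_mem h0]
  step G H hG hGH := by
    rw [compoundRemoteness_of_ne_zero hGH.ne_zero_left,
      compoundRemoteness_of_ne_zero hGH.ne_zero_right]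
    exact hGH.remotenessStep (not_ended_iff.1 hG).2
  exists_pred G hG := by
    obtain ⟨hG0, h0⟩ := not_ended_iff.1 hG
    obtain ⟨H, hGH, hfH⟩ := exists_conjMove_succ_eq hG0 h0
    refine ⟨H, hGH, ?_⟩
    rwa [compoundRemoteness_of_ne_zero hG0, compoundRemoteness_of_ne_zero hGH.ne_zero_right]

lemma wellFounded_conjMove : WellFounded fun H G => ConjMove G H ∧ ¬ Ended G :=
  Subrelation.wf (fun ⟨hGH, hG⟩ => hGH.sum_lt (not_ended_iff.1 hG).2)
    (wellFounded_lt.onFun (f := Multiset.sum))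

theorem conjunctive_remoteness_normal (R : Multiset ℕ → ℕ)
    (hend : ∀ G, Ended G → R G = 0)
    (heven : ∀ G, ¬ Ended G → (∃ H, ConjMove G H ∧ Even (R H)) →
      R G = 1 + sInf {r | Even r ∧ ∃ H, ConjMove G H ∧ R H = r})
    (hodd : ∀ G, ¬ Ended G → ¬ (∃ H, ConjMove G H ∧ Even (R H)) →
      R G = 1 + sSup {r | Odd r ∧ ∃ H, ConjMove G H ∧ R H = r}) :
    R {1} = 1 ∧ R {2} = 1 ∧ R {3} = 1 ∧ R {4} = 2 ∧ R {5} = 2 ∧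
    R {6} = 3 ∧ R {7} = 3 ∧ R {8} = 3 ∧ R {9} = 4 ∧ R {10} = 4 ∧
    ∀ n, 11 ≤ n → R {n} = 3 := by
  have hR : R = compoundRemoteness := IsRemoteness.eq_of_certificate ⟨hend, heven, hodd⟩
    wellFounded_conjMove isRemotenessCertificate_compoundRemoteness
  simp only [hR, compoundRemoteness_singleton]
  exact ⟨rfl, rfl, rfl, rfl, rfl, rfl, rfl, rfl, rfl, rfl, fun n => pathRemoteness_of_eleven_le⟩
end

section
/- Let R⁻ be the misère remoteness for conjunctive compound Node-Kayles on paths: R⁻(empty) = 0 and R⁻(G) = 1 + min{odd remotenesses of options of G} if some option has odd remoteness, otherwise R⁻(G) = 1 + max{even remotenesses of options of G}; the remoteness of a disjoint union is computed recursively under conjunctive moves. Then R⁻(P_1) = R⁻(P_2) = 1 and R⁻(P_n) = 2 for every n ≥ 3. -/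
/-!
A position all of whose moves end the game has misère remoteness `1`: its only option
remoteness is the even number `0`. Any conjunctive move in a position containing `P 1` or
`P 2` ends that component, so such positions (if not already ended) have remoteness `1`;
this covers `P 1`, `P 2` and `P 1 ∪ P k`. For `n ≥ 3`, `P n` has such an option
(`P (n - 2)` for `n ≤ 4`, `P 1 ∪ P (n - 4)` otherwise), and since `1` is the least odd
number, `R (P n) = 1 + 1 = 2`.
-/

lemma pathOptions_of_pos_of_le_two {k : ℕ} (h1 : 1 ≤ k) (h2 : k ≤ 2) :
    pathOptions k = {{0}} := by
  simp only [pathOptions, if_neg (show k ≠ 0 by omega), if_pos h2]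

lemma singleton_sub_two_mem_pathOptions {n : ℕ} (hn : 3 ≤ n) :
    {n - 2} ∈ pathOptions n := by
  simp only [pathOptions, if_neg (show n ≠ 0 by omega), if_neg (show ¬ n ≤ 2 by omega)]
  exact Or.inl (Or.inl rfl)

lemma pair_mem_pathOptions {i j n : ℕ} (hi : 1 ≤ i) (hij : i ≤ j) (hn : i + j + 3 = n) :
    {i, j} ∈ pathOptions n := by
  simp only [pathOptions, if_neg (show n ≠ 0 by omega), if_neg (show ¬ n ≤ 2 by omega)]
  exact Or.inr ⟨i, j, hi, hij, by omega, rfl⟩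

lemma pathOptions_nonempty {k : ℕ} (hk : 1 ≤ k) : (pathOptions k).Nonempty := by
  rcases le_or_gt k 2 with h2 | h3
  · exact ⟨{0}, by simp [pathOptions_of_pos_of_le_two hk h2]⟩
  · exact ⟨_, singleton_sub_two_mem_pathOptions h3⟩

lemma not_ended_singleton {n : ℕ} (hn : n ≠ 0) : ¬ Ended {n} :=
  not_ended_iff.mpr ⟨Multiset.singleton_ne_zero n, by simpa using hn.symm⟩

lemma exists_conjMove_of_not_ended {G : Multiset ℕ} (hG : ¬ Ended G) : ∃ H, ConjMove G H := by
  induction G using Multiset.induction_on with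
  | empty => exact absurd (Or.inl rfl) hG
  | cons n G ih =>
    obtain ⟨-, hzero⟩ := not_ended_iff.mp hG
    obtain ⟨h, hh⟩ := pathOptions_nonempty (Nat.one_le_iff_ne_zero.mpr fun hn ↦
      hzero (hn ▸ Multiset.mem_cons_self n G))
    by_cases hG0 : G = 0
    · subst hG0
      exact ⟨h, ConjMove.single hh⟩
    · obtain ⟨H, hH⟩ := ih (not_ended_iff.mpr ⟨hG0, fun h0 ↦ hzero (Multiset.mem_cons_of_mem h0)⟩)
      exact ⟨h + H, ConjMove.cons hh hH⟩

lemma ConjMove.exists_le_of_mem {G H : Multiset ℕ} (hGH : ConjMove G H) {n : ℕ} (hn : n ∈ G) :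
    ∃ h ∈ pathOptions n, h ≤ H := by
  induction hGH with
  | single hh =>
    rw [Multiset.mem_singleton.mp hn]
    exact ⟨_, hh, le_rfl⟩
  | cons hh _ ih =>
    rcases Multiset.mem_cons.mp hn with rfl | hn
    · exact ⟨_, hh, Multiset.le_add_right _ _⟩
    · obtain ⟨h, hh', hle⟩ := ih hn
      exact ⟨h, hh', hle.trans (Multiset.le_add_left _ _)⟩

lemma ConjMove.ended_of_mem {G H : Multiset ℕ} (hGH : ConjMove G H) {k : ℕ} (hk : k ∈ G)
    (h1 : 1 ≤ k) (h2 : k ≤ 2) : Ended H := by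
  obtain ⟨h, hh, hle⟩ := hGH.exists_le_of_mem hk
  rw [pathOptions_of_pos_of_le_two h1 h2, Set.mem_singleton_iff] at hh
  subst hh
  exact Or.inr (Multiset.mem_of_le hle (Multiset.mem_singleton_self 0))

lemma remoteness_eq_one_of_forall_conjMove_eq_zero (R : Multiset ℕ → ℕ)
    (heven : ∀ G, ¬ Ended G → ¬ (∃ H, ConjMove G H ∧ Odd (R H)) →
      R G = 1 + sSup {r | Even r ∧ ∃ H, ConjMove G H ∧ R H = r})
    {G : Multiset ℕ} (hG : ¬ Ended G) (hzero : ∀ H, ConjMove G H → R H = 0) : R G = 1 := by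
  obtain ⟨H₀, hH₀⟩ := exists_conjMove_of_not_ended hG
  have hno_odd : ¬ ∃ H, ConjMove G H ∧ Odd (R H) := by
    rintro ⟨H, hH, hodd⟩
    rw [hzero H hH] at hodd
    exact Nat.not_odd_zero hodd
  have hset : {r | Even r ∧ ∃ H, ConjMove G H ∧ R H = r} = {0} := by
    ext r
    constructor
    · rintro ⟨-, H, hH, rfl⟩
      exact hzero H hH
    · rintro rfl
      exact ⟨Even.zero, H₀, hH₀, hzero H₀ hH₀⟩
  rw [heven G hG hno_odd, hset, csSup_singleton]

lemma remoteness_eq_one_of_mem (R : Multiset ℕ → ℕ) (hend : ∀ G, Ended G → R G = 0)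
    (heven : ∀ G, ¬ Ended G → ¬ (∃ H, ConjMove G H ∧ Odd (R H)) →
      R G = 1 + sSup {r | Even r ∧ ∃ H, ConjMove G H ∧ R H = r})
    {G : Multiset ℕ} (hG : ¬ Ended G) {k : ℕ} (hk : k ∈ G) (h1 : 1 ≤ k) (h2 : k ≤ 2) :
    R G = 1 :=
  remoteness_eq_one_of_forall_conjMove_eq_zero R heven hG
    fun _ hH ↦ hend _ (hH.ended_of_mem hk h1 h2)

lemma remoteness_eq_two_of_conjMove (R : Multiset ℕ → ℕ)
    (hodd : ∀ G, ¬ Ended G → (∃ H, ConjMove G H ∧ Odd (R H)) →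
      R G = 1 + sInf {r | Odd r ∧ ∃ H, ConjMove G H ∧ R H = r})
    {G H : Multiset ℕ} (hG : ¬ Ended G) (hGH : ConjMove G H) (hH : R H = 1) : R G = 2 := by
  have hleast : IsLeast {r | Odd r ∧ ∃ H, ConjMove G H ∧ R H = r} 1 :=
    ⟨⟨odd_one, H, hGH, hH⟩, fun _ ⟨hr, _⟩ ↦ hr.pos⟩
  rw [hodd G hG ⟨H, hGH, hH ▸ odd_one⟩, hleast.csInf_eq]

lemma exists_mem_pathOptions_of_three_le {n : ℕ} (hn : 3 ≤ n) :
    ∃ H ∈ pathOptions n, ¬ Ended H ∧ ∃ k ∈ H, 1 ≤ k ∧ k ≤ 2 := by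
  rcases le_or_gt n 4 with h4 | h5
  · exact ⟨{n - 2}, singleton_sub_two_mem_pathOptions hn, not_ended_singleton (by omega),
      n - 2, Multiset.mem_singleton_self _, by omega, by omega⟩
  · have hpair_not_ended : ¬ Ended {1, n - 4} :=
      not_ended_iff.mpr ⟨Multiset.cons_ne_zero, by simp only [Multiset.insert_eq_cons,
        Multiset.mem_cons, Multiset.mem_singleton]; omega⟩
    exact ⟨{1, n - 4}, pair_mem_pathOptions le_rfl (by omega) (by omega), hpair_not_ended,
      1, Multiset.mem_cons_self _ _, le_rfl, one_le_two⟩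

theorem conjunctive_remoteness_misere (R : Multiset ℕ → ℕ)
    (hend : ∀ G, Ended G → R G = 0)
    (hodd : ∀ G, ¬ Ended G → (∃ H, ConjMove G H ∧ Odd (R H)) →
      R G = 1 + sInf {r | Odd r ∧ ∃ H, ConjMove G H ∧ R H = r})
    (heven : ∀ G, ¬ Ended G → ¬ (∃ H, ConjMove G H ∧ Odd (R H)) →
      R G = 1 + sSup {r | Even r ∧ ∃ H, ConjMove G H ∧ R H = r}) :
    R {1} = 1 ∧ R {2} = 1 ∧ ∀ n, 3 ≤ n → R {n} = 2 := by
  refine ⟨remoteness_eq_one_of_mem R hend heven (not_ended_singleton one_ne_zero)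
      (Multiset.mem_singleton_self 1) le_rfl one_le_two,
    remoteness_eq_one_of_mem R hend heven (not_ended_singleton two_ne_zero)
      (Multiset.mem_singleton_self 2) one_le_two le_rfl, fun n hn ↦ ?_⟩
  obtain ⟨H, hH, hH_not_ended, k, hk, h1, h2⟩ := exists_mem_pathOptions_of_three_le hn
  exact remoteness_eq_two_of_conjMove R hodd (not_ended_singleton (by omega))
    (ConjMove.single hH) (remoteness_eq_one_of_mem R hend heven hH_not_ended hk h1 h2)
end

section
/- Let S⁺ be the normal suspense number for continued conjunctive compound Node-Kayles on paths: S⁺(empty)=0; S⁺(G) = 1 + max{even suspense numbers of options of G} if some option has even suspense number, otherwise S⁺(G) = 1 + min{odd suspense numbers of options of G}; and S⁺(P_i ∪ P_j) = max(S⁺(P_i), S⁺(P_j)). Then S⁺ is increasing on paths and for every n ≥ 0: S⁺(P_{5(2^n−1)}) = 2n, S⁺(P_k) = 2n+1 for all k with 5(2^n−1)+1 ≤ k ≤ 5(2^{n+1}−1)−2, and S⁺(P_{5(2^{n+1}−1)−1}) = 2n+2. -/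
/-!
The recursion determines the suspense numbers uniquely from `S 0 = 0`, so it suffices to check it
for an explicit monotone candidate. For a monotone valuation the value `max (S i) (S j)` of
`P_i ∪ P_j`, `i ≤ j`, is `S j`, so the options of `P_k` take exactly the values on the window
`[(k - 2) / 2, k - 2]`. The windows of `5 (2^n - 1)` and of `5 (2^(n+1) - 1) - 1` lie inside a
block where the candidate has constant odd value, which yields the even values; for every other
`k` in between, the window contains the even value `2n` and no larger even value, which yields
`2n + 1`.
-/

/-- The values, under a valuation `f` of paths (with `f 0` the value of the empty
position), of the options of the path `P n` in Node-Kayles, where the value of a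
disjoint union `P i ∪ P j` is `max (f i) (f j)`.  For `n = 1, 2` the only option
is the empty position; for `n ≥ 3` the options are `P (n-2)`, `P (n-3)` and the
unions `P i ∪ P j` with `j ≥ i ≥ 1`, `i + j = n - 3`. -/
def optValues (f : ℕ → ℕ) (n : ℕ) : Set ℕ :=
  if n ≤ 2 then {f 0}
  else {f (n - 2), f (n - 3)} ∪
    {v | ∃ i j : ℕ, 1 ≤ i ∧ i ≤ j ∧ i + j = n - 3 ∧ v = max (f i) (f j)}

open Classical in
noncomputable def suspenseStep (s : Set ℕ) : ℕ :=
  if ∃ v ∈ s, Even v then 1 + sSup {v ∈ s | Even v} else 1 + sInf {v ∈ s | Odd v}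

theorem suspenseStep_singleton (a : ℕ) : suspenseStep {a} = a + 1 := by
  rcases Nat.even_or_odd a with ha | ha
  · have : {v ∈ ({a} : Set ℕ) | Even v} = {a} := by ext v; simp +contextual [ha]
    rw [suspenseStep, if_pos ⟨a, rfl, ha⟩, this, csSup_singleton, add_comm]
  · have : {v ∈ ({a} : Set ℕ) | Odd v} = {a} := by ext v; simp +contextual [ha]
    rw [suspenseStep, if_neg (by simpa [Nat.not_even_iff_odd] using ha), this, csInf_singleton,
      add_comm]

theorem suspenseStep_eq_of_isGreatest {s : Set ℕ} {a : ℕ} (h : IsGreatest {v ∈ s | Even v} a) :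
    suspenseStep s = a + 1 := by
  rw [suspenseStep, if_pos ⟨a, h.1⟩, h.csSup_eq, add_comm]

theorem optValues_congr {f g : ℕ → ℕ} {k : ℕ} (hk : 1 ≤ k) (h : ∀ j < k, f j = g j) :
    optValues f k = optValues g k := by
  unfold optValues
  split_ifs
  · rw [h 0 hk]
  · ext v
    simp only [Set.mem_union, Set.mem_insert_iff, Set.mem_singleton_iff, Set.mem_ofPred_eq]
    rw [h (k - 2) (by omega), h (k - 3) (by omega)]
    refine or_congr_right (exists₂_congr fun i j => and_congr_right fun hi =>
      and_congr_right fun hij => and_congr_right fun hsum => ?_)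
    rw [h i (by omega), h j (by omega)]

theorem optValues_eq_image_Icc {f : ℕ → ℕ} (hf : Monotone f) {k : ℕ} (hk : 3 ≤ k) :
    optValues f k = f '' Set.Icc ((k - 2) / 2) (k - 2) := by
  rw [optValues, if_neg (by omega)]
  ext v
  simp only [Set.mem_union, Set.mem_insert_iff, Set.mem_singleton_iff, Set.mem_ofPred_eq,
    Set.mem_image, Set.mem_Icc]
  constructor
  · rintro ((rfl | rfl) | ⟨i, j, hi, hij, hsum, rfl⟩)
    · exact ⟨k - 2, ⟨by omega, le_rfl⟩, rfl⟩
    · exact ⟨k - 3, ⟨by omega, by omega⟩, rfl⟩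
    · exact ⟨j, ⟨by omega, by omega⟩, (max_eq_right (hf hij)).symm⟩
  · rintro ⟨j, ⟨hj₁, hj₂⟩, rfl⟩
    obtain hj | hj | hj : j = k - 2 ∨ j = k - 3 ∨ j < k - 3 := by omega
    · exact Or.inl (Or.inl (hj ▸ rfl))
    · exact Or.inl (Or.inr (hj ▸ rfl))
    · exact Or.inr ⟨k - 3 - j, j, by omega, by omega, by omega,
        (max_eq_right (hf (by omega))).symm⟩

def IsNormalSuspense (f : ℕ → ℕ) : Prop :=
  f 0 = 0 ∧ ∀ n, 1 ≤ n → f n = suspenseStep (optValues f n)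

theorem IsNormalSuspense.unique {f g : ℕ → ℕ} (hf : IsNormalSuspense f)
    (hg : IsNormalSuspense g) : f = g := by
  funext k
  induction k using Nat.strong_induction_on with
  | _ k ih =>
    rcases Nat.eq_zero_or_pos k with rfl | hk
    · rw [hf.1, hg.1]
    · rw [hf.2 k hk, hg.2 k hk, optValues_congr hk ih]

theorem Nat.size_div_eq {m d n : ℕ} (hd : 0 < d) (h₁ : d * 2 ^ n ≤ m)
    (h₂ : m < d * 2 ^ (n + 1)) : (m / d).size = n + 1 :=
  le_antisymm (Nat.size_le.2 (Nat.div_lt_of_lt_mul h₂))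
    (Nat.lt_size.2 ((Nat.le_div_iff_mul_le hd).2 (by rwa [mul_comm])))

/-- `((k + 4) / 5).size` counts the `n` with `5 * (2 ^ n - 1) < k` and `((k + 6) / 10).size`
those with `5 * (2 ^ (n + 1) - 1) - 1 ≤ k`: these are the places where the suspense number
increases. -/
def kaylesSuspense (k : ℕ) : ℕ := ((k + 4) / 5).size + ((k + 6) / 10).size

theorem kaylesSuspense_mono : Monotone kaylesSuspense := fun _ _ h =>
  add_le_add (Nat.size_le_size (Nat.div_le_div_right (by omega)))
    (Nat.size_le_size (Nat.div_le_div_right (by omega)))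

theorem kaylesSuspense_threshold (n : ℕ) : kaylesSuspense (5 * (2 ^ n - 1)) = 2 * n := by
  cases n with
  | zero => rfl
  | succ n =>
    have := Nat.one_le_two_pow (n := n)
    have := pow_succ 2 n
    have := pow_succ 2 (n + 1)
    rw [kaylesSuspense, Nat.size_div_eq (n := n) (by norm_num) (by omega) (by omega),
      Nat.size_div_eq (n := n) (by norm_num) (by omega) (by omega)]
    ring

theorem kaylesSuspense_of_lt_of_le {n k : ℕ} (hk₁ : 5 * (2 ^ n - 1) < k)
    (hk₂ : k ≤ 5 * (2 ^ (n + 1) - 1) - 2) : kaylesSuspense k = 2 * n + 1 := by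
  have := Nat.one_le_two_pow (n := n)
  have := pow_succ 2 n
  rw [kaylesSuspense, Nat.size_div_eq (n := n) (by norm_num) (by omega) (by omega)]
  cases n with
  | zero => rw [Nat.div_eq_of_lt (by omega), Nat.size_zero]
  | succ n =>
    have := pow_succ 2 n
    rw [Nat.size_div_eq (n := n) (by norm_num) (by omega) (by omega)]
    ring

theorem kaylesSuspense_threshold_sub_one (n : ℕ) :
    kaylesSuspense (5 * (2 ^ (n + 1) - 1) - 1) = 2 * n + 2 := by
  have := Nat.one_le_two_pow (n := n)
  have := pow_succ 2 n
  have := pow_succ 2 (n + 1)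
  rw [kaylesSuspense, Nat.size_div_eq (n := n) (by norm_num) (by omega) (by omega),
    Nat.size_div_eq (n := n) (by norm_num) (by omega) (by omega)]
  ring

theorem exists_threshold_le_lt (k : ℕ) :
    ∃ n, 5 * (2 ^ n - 1) ≤ k ∧ k < 5 * (2 ^ (n + 1) - 1) := by
  refine ⟨Nat.log 2 (k / 5 + 1), ?_, ?_⟩
  · have := Nat.pow_log_le_self 2 (x := k / 5 + 1) (by omega)
    omega
  · have := Nat.lt_pow_succ_log_self (b := 2) (by norm_num) (k / 5 + 1)
    omega

theorem suspenseStep_image_Icc_of_lt_of_le {n a b : ℕ} (hab : a ≤ b) (ha : 5 * (2 ^ n - 1) < a)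
    (hb : b ≤ 5 * (2 ^ (n + 1) - 1) - 2) :
    suspenseStep (kaylesSuspense '' Set.Icc a b) = 2 * n + 2 := by
  have hconst : Set.EqOn kaylesSuspense (fun _ => 2 * n + 1) (Set.Icc a b) :=
    fun j hj => kaylesSuspense_of_lt_of_le (ha.trans_le hj.1) (hj.2.trans hb)
  rw [hconst.image_eq, (Set.nonempty_Icc.2 hab).image_const, suspenseStep_singleton]

theorem isGreatest_even_kaylesSuspense_image_Icc {n k : ℕ} (hk : 3 ≤ k)
    (hk₁ : 5 * (2 ^ n - 1) < k) (hk₂ : k ≤ 5 * (2 ^ (n + 1) - 1) - 2) :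
    IsGreatest {v ∈ kaylesSuspense '' Set.Icc ((k - 2) / 2) (k - 2) | Even v} (2 * n) := by
  have := Nat.one_le_two_pow (n := n)
  have := pow_succ 2 n
  refine ⟨⟨?_, even_two_mul n⟩, ?_⟩
  · by_cases hk' : 5 * (2 ^ n - 1) ≤ k - 2
    · exact ⟨_, ⟨by omega, hk'⟩, kaylesSuspense_threshold n⟩
    · obtain ⟨m, rfl⟩ : ∃ m, n = m + 1 := Nat.exists_eq_succ_of_ne_zero (by rintro rfl; omega)
      refine ⟨k - 2, ⟨by omega, le_rfl⟩, ?_⟩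
      rw [show k - 2 = 5 * (2 ^ (m + 1) - 1) - 1 by omega, kaylesSuspense_threshold_sub_one]
      ring
  · rintro _ ⟨⟨j, hj, rfl⟩, heven⟩
    have hle : kaylesSuspense j ≤ 2 * n + 1 :=
      (kaylesSuspense_mono (hj.2.trans (by omega))).trans_eq
        (kaylesSuspense_of_lt_of_le (n := n) (k := 5 * (2 ^ (n + 1) - 1) - 2) (by omega) le_rfl)
    obtain ⟨r, hr⟩ := heven
    omega

theorem isNormalSuspense_kaylesSuspense : IsNormalSuspense kaylesSuspense := by
  refine ⟨rfl, fun k hk => ?_⟩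
  rcases Nat.lt_or_ge k 3 with hk3 | hk3
  · have hopt : optValues kaylesSuspense k = {0} := by rw [optValues, if_pos (by omega)]; rfl
    rw [hopt, suspenseStep_singleton, kaylesSuspense_of_lt_of_le (n := 0) (by omega) (by omega)]
  obtain ⟨n, hn₁, hn₂⟩ := exists_threshold_le_lt k
  have := Nat.one_le_two_pow (n := n)
  have := pow_succ 2 n
  rw [optValues_eq_image_Icc kaylesSuspense_mono hk3]
  obtain rfl | hn₁ := hn₁.eq_or_lt
  · obtain ⟨m, rfl⟩ : ∃ m, n = m + 1 := Nat.exists_eq_succ_of_ne_zero (by rintro rfl; omega)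
    have := pow_succ 2 m
    rw [kaylesSuspense_threshold, suspenseStep_image_Icc_of_lt_of_le (n := m) (by omega)
      (by omega) (by omega)]
    ring
  by_cases htop : k = 5 * (2 ^ (n + 1) - 1) - 1
  · subst htop
    rw [kaylesSuspense_threshold_sub_one, suspenseStep_image_Icc_of_lt_of_le (n := n) (by omega)
      (by omega) (by omega)]
  · rw [kaylesSuspense_of_lt_of_le hn₁ (by omega),
      suspenseStep_eq_of_isGreatest (isGreatest_even_kaylesSuspense_image_Icc hk3 hn₁ (by omega))]

theorem suspense_normal (S : ℕ → ℕ)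
    (h0 : S 0 = 0)
    (heven : ∀ n, 1 ≤ n → (∃ v ∈ optValues S n, Even v) →
      S n = 1 + sSup {v ∈ optValues S n | Even v})
    (hodd : ∀ n, 1 ≤ n → ¬ (∃ v ∈ optValues S n, Even v) →
      S n = 1 + sInf {v ∈ optValues S n | Odd v}) :
    Monotone S ∧ ∀ n : ℕ,
      S (5 * (2 ^ n - 1)) = 2 * n ∧
      (∀ k, 5 * (2 ^ n - 1) + 1 ≤ k → k ≤ 5 * (2 ^ (n + 1) - 1) - 2 → S k = 2 * n + 1) ∧
      S (5 * (2 ^ (n + 1) - 1) - 1) = 2 * n + 2 := by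
  have hS : IsNormalSuspense S := by
    refine ⟨h0, fun n hn => ?_⟩
    by_cases h : ∃ v ∈ optValues S n, Even v
    · rw [heven n hn h, suspenseStep, if_pos h]
    · rw [hodd n hn h, suspenseStep, if_neg h]
  obtain rfl := hS.unique isNormalSuspense_kaylesSuspense
  exact ⟨kaylesSuspense_mono, fun n => ⟨kaylesSuspense_threshold n,
    fun _ => kaylesSuspense_of_lt_of_le, kaylesSuspense_threshold_sub_one n⟩⟩
end

section
/- Define σ : ℕ → {0,1} by σ(0) = 0 and, for n ≥ 1, σ(n) = 1 − min over options G' of P_n of σ(G'), where σ(P_i ∪ P_j) = σ(i) ∨ σ(j) (boolean or). Then for every n ≥ 0: σ(5n) = σ(5n+4) = 0 and σ(5n+1) = σ(5n+2) = σ(5n+3) = 1. -/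
lemma optValues_of_le_two (f : ℕ → ℕ) {n : ℕ} (hn : n ≤ 2) : optValues f n = {f 0} :=
  if_pos hn

lemma optValues_add_three (f : ℕ → ℕ) (m : ℕ) :
    optValues f (m + 3) = {f (m + 1), f m} ∪
      {v | ∃ i j : ℕ, 1 ≤ i ∧ i ≤ j ∧ i + j = m ∧ v = max (f i) (f j)} := by
  simp only [optValues, if_neg (by omega : ¬ m + 3 ≤ 2), Nat.add_sub_cancel,
    show m + 3 - 2 = m + 1 by omega]

lemma optValues_congr_s10 {f g : ℕ → ℕ} {n : ℕ} (hn : 1 ≤ n) (hfg : ∀ k < n, f k = g k) :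
    optValues f n = optValues g n := by
  obtain hn2 | ⟨m, rfl⟩ : n ≤ 2 ∨ ∃ m, n = m + 3 := by
    rcases le_or_gt n 2 with h | h
    · exact .inl h
    · exact .inr ⟨n - 3, by omega⟩
  · rw [optValues_of_le_two f hn2, optValues_of_le_two g hn2, hfg 0 hn]
  · have hsplit : ∀ i j, i + j = m → max (f i) (f j) = max (g i) (g j) := fun i j hij => by
      rw [hfg i (by omega), hfg j (by omega)]
    rw [optValues_add_three, optValues_add_three, hfg (m + 1) (by omega), hfg m (by omega)]
    congr! 3 with v
    exact ⟨fun ⟨i, j, hi, hij, hs, hv⟩ => ⟨i, j, hi, hij, hs, hv.trans (hsplit i j hs)⟩,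
      fun ⟨i, j, hi, hij, hs, hv⟩ => ⟨i, j, hi, hij, hs, hv.trans (hsplit i j hs).symm⟩⟩

lemma eq_of_optValues_recursion {f g : ℕ → ℕ} (h0 : f 0 = g 0)
    (hf : ∀ n, 1 ≤ n → f n = 1 - sInf (optValues f n))
    (hg : ∀ n, 1 ≤ n → g n = 1 - sInf (optValues g n)) : f = g := by
  funext n
  induction n using Nat.strong_induction_on with
  | _ n ih =>
    rcases Nat.eq_zero_or_pos n with rfl | hn
    · exact h0
    · rw [hf n hn, hg n hn, optValues_congr_s10 hn ih]

def sigmaPattern (n : ℕ) : ℕ := if n % 5 = 0 ∨ n % 5 = 4 then 0 else 1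

lemma sigmaPattern_eq_zero_iff {n : ℕ} : sigmaPattern n = 0 ↔ n % 5 = 0 ∨ n % 5 = 4 := by
  unfold sigmaPattern; split_ifs <;> simp_all

lemma sigmaPattern_le_one (n : ℕ) : sigmaPattern n ≤ 1 := by
  unfold sigmaPattern; split_ifs <;> simp

lemma zero_mem_optValues_sigmaPattern {n : ℕ} (hn : n % 5 = 1 ∨ n % 5 = 2 ∨ n % 5 = 3) :
    0 ∈ optValues sigmaPattern n := by
  rcases le_or_gt n 2 with h | h
  · simp [optValues_of_le_two _ h, sigmaPattern]
  · obtain ⟨m, rfl⟩ : ∃ m, n = m + 3 := ⟨n - 3, by omega⟩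
    rw [optValues_add_three]
    refine .inl ?_
    by_cases hm : m % 5 = 0
    · exact .inr (sigmaPattern_eq_zero_iff.2 (.inl hm)).symm
    · exact .inl (sigmaPattern_eq_zero_iff.2 (by omega)).symm

lemma optValues_sigmaPattern_eq_one {n : ℕ} (hn : 1 ≤ n) (hn5 : n % 5 = 0 ∨ n % 5 = 4) :
    optValues sigmaPattern n = {1} := by
  obtain ⟨m, rfl⟩ : ∃ m, n = m + 3 := ⟨n - 3, by omega⟩
  have hpos : ∀ k, (k % 5 = 0 ∨ k % 5 = 4 → False) → sigmaPattern k = 1 := fun k hk => by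
    have := sigmaPattern_le_one k
    have := mt sigmaPattern_eq_zero_iff.1 hk
    omega
  rw [optValues_add_three, hpos (m + 1) (by omega), hpos m (by omega)]
  ext v
  simp only [Set.mem_union, Set.mem_insert_iff, Set.mem_singleton_iff, Set.mem_ofPred_eq,
    or_self]
  refine ⟨?_, .inl⟩
  rintro (rfl | ⟨i, j, -, -, rfl, rfl⟩)
  · rfl
  · have hi := sigmaPattern_le_one i
    have hj := sigmaPattern_le_one j
    have : sigmaPattern i = 1 ∨ sigmaPattern j = 1 := by
      by_contra! h
      have := sigmaPattern_eq_zero_iff.1 (by omega : sigmaPattern i = 0)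
      have := sigmaPattern_eq_zero_iff.1 (by omega : sigmaPattern j = 0)
      omega
    omega

lemma sigmaPattern_recursion (n : ℕ) (hn : 1 ≤ n) :
    sigmaPattern n = 1 - sInf (optValues sigmaPattern n) := by
  by_cases hn5 : n % 5 = 0 ∨ n % 5 = 4
  · rw [optValues_sigmaPattern_eq_one hn hn5, csInf_singleton, sigmaPattern_eq_zero_iff.2 hn5]
  · rw [Nat.sInf_eq_zero.2 (.inl (zero_mem_optValues_sigmaPattern (by omega))), sigmaPattern,
      if_neg hn5]

theorem selective_normal_general (σ : ℕ → ℕ) (h0 : σ 0 = 0)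
    (hrec : ∀ n, 1 ≤ n → σ n = 1 - sInf (optValues σ n)) :
    ∀ n : ℕ, σ (5 * n) = 0 ∧ σ (5 * n + 4) = 0 ∧
      σ (5 * n + 1) = 1 ∧ σ (5 * n + 2) = 1 ∧ σ (5 * n + 3) = 1 := by
  obtain rfl : σ = sigmaPattern := eq_of_optValues_recursion h0 hrec sigmaPattern_recursion
  intro n
  simp [sigmaPattern, Nat.add_mod]

theorem selective_normal (σ : ℕ → ℕ) (hb : ∀ n, σ n ≤ 1) (h0 : σ 0 = 0)
    (hrec : ∀ n, 1 ≤ n → σ n = 1 - sInf (optValues σ n)) :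
    ∀ n : ℕ, σ (5 * n) = 0 ∧ σ (5 * n + 4) = 0 ∧
      σ (5 * n + 1) = 1 ∧ σ (5 * n + 2) = 1 ∧ σ (5 * n + 3) = 1 :=
  selective_normal_general σ h0 hrec
end

section
/- Under normal play of selective compound Node-Kayles, the set of losing path lengths is exactly {5n : n ≥ 0} ∪ {5n + 4 : n ≥ 0}, i.e., P_n is a P-position iff n ≡ 0 or 4 (mod 5). -/
/-- `L` holds for some option of the path `P n`, an option `P i ∪ P j` counting when `L` holds
for both components; the options are those listed in `optValues`. -/
def HasOptionWith (L : ℕ → Prop) (n : ℕ) : Prop :=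
  if n ≤ 2 then L 0
  else L (n - 2) ∨ L (n - 3) ∨ ∃ i j : ℕ, 1 ≤ i ∧ i ≤ j ∧ i + j = n - 3 ∧ L i ∧ L j

theorem optValues_nonempty (f : ℕ → ℕ) (n : ℕ) : (optValues f n).Nonempty := by
  unfold optValues
  split_ifs
  · exact Set.singleton_nonempty _
  · exact ⟨f (n - 2), Or.inl (Set.mem_insert _ _)⟩

theorem zero_mem_optValues_iff (f : ℕ → ℕ) (n : ℕ) :
    0 ∈ optValues f n ↔ HasOptionWith (fun m => f m = 0) n := by
  unfold optValues HasOptionWith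
  split_ifs
  · exact eq_comm
  · simp only [Set.mem_union, Set.mem_insert_iff, Set.mem_singleton_iff, Set.mem_ofPred_eq,
      eq_comm (a := 0), Nat.max_eq_zero_iff, or_assoc]

theorem hasOptionWith_congr {L L' : ℕ → Prop} {n : ℕ} (hn : 1 ≤ n)
    (h : ∀ m < n, (L m ↔ L' m)) : HasOptionWith L n ↔ HasOptionWith L' n := by
  unfold HasOptionWith
  split_ifs
  · exact h 0 hn
  · rw [h (n - 2) (by omega), h (n - 3) (by omega)]
    refine or_congr_right (or_congr_right (exists_congr fun i => exists_congr fun j => ?_))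
    refine and_congr_right fun _ => and_congr_right fun _ => and_congr_right fun _ => ?_
    rw [h i (by omega), h j (by omega)]

theorem one_sub_sInf_eq_zero_iff {S : Set ℕ} (hS : S.Nonempty) : 1 - sInf S = 0 ↔ 0 ∉ S := by
  rw [Nat.sub_eq_zero_iff_le, Nat.one_le_iff_ne_zero, Ne, Nat.sInf_eq_zero]
  simp [hS.ne_empty]

theorem mod_five_losing_iff_not_hasOptionWith {n : ℕ} (hn : 1 ≤ n) :
    (n % 5 = 0 ∨ n % 5 = 4) ↔ ¬ HasOptionWith (fun m => m % 5 = 0 ∨ m % 5 = 4) n := by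
  unfold HasOptionWith
  split_ifs
  · omega
  · constructor
    · rintro hlos (h | h | ⟨i, j, -, -, hij, hi, hj⟩) <;> omega
    · intro h
      by_contra hlos
      have hshort : ((n - 2) % 5 = 0 ∨ (n - 2) % 5 = 4) ∨ (n - 3) % 5 = 0 ∨ (n - 3) % 5 = 4 := by
        omega
      tauto

theorem selective_normal_losing_general (σ : ℕ → ℕ) (h0 : σ 0 = 0)
    (hrec : ∀ n, 1 ≤ n → σ n = 1 - sInf (optValues σ n)) :
    ∀ n : ℕ, σ n = 0 ↔ n % 5 = 0 ∨ n % 5 = 4 := by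
  intro n
  induction n using Nat.strong_induction_on with
  | _ n ih =>
    rcases Nat.eq_zero_or_pos n with rfl | hn
    · simp [h0]
    · rw [hrec n hn, one_sub_sInf_eq_zero_iff (optValues_nonempty σ n), zero_mem_optValues_iff,
        hasOptionWith_congr hn ih, mod_five_losing_iff_not_hasOptionWith hn]

theorem selective_normal_losing (σ : ℕ → ℕ) (hb : ∀ n, σ n ≤ 1) (h0 : σ 0 = 0)
    (hrec : ∀ n, 1 ≤ n → σ n = 1 - sInf (optValues σ n)) :
    ∀ n : ℕ, σ n = 0 ↔ n % 5 = 0 ∨ n % 5 = 4 :=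
  selective_normal_losing_general σ h0 hrec
end

section
/- Suppose ρ : ℕ → ℕ is the Sprague–Grundy function of an octal game on heaps satisfying: for some p > 0 and q > 0, ρ(n+p) = ρ(n) for every n with q ≤ n ≤ 2q + p + 2, where ρ(n) = mex({ρ(n-2), ρ(n-3)} ∪ {ρ(i) ⊕ ρ(j) : j ≥ i ≥ 1, i+j = n-3}) for n ≥ 4. Then ρ(n+p) = ρ(n) for every n ≥ q. -/
/-- The Grundy values of the options of the path `P n` in Node-Kayles under the
valuation `ρ`: the values of `P (n-2)` and `P (n-3)`, together with the Nim-sums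
`ρ i ^^^ ρ j` for the unions `P i ∪ P j` with `j ≥ i ≥ 1` and `i + j = n - 3`. -/
def grundyOptValues (ρ : ℕ → ℕ) (n : ℕ) : Set ℕ :=
  {ρ (n - 2), ρ (n - 3)} ∪
    {v | ∃ i j : ℕ, 1 ≤ i ∧ i ≤ j ∧ i + j = n - 3 ∧ v = ρ i ^^^ ρ j}

/-!
Once `n ≥ 2q + p + 3`, every option of `P (n + p)` splitting it into `P i ∪ P j` with `i ≤ j`
has `j ≥ q + p`, so replacing `j` by `j - p` (still `≥ q ≥ 1`) matches the options of `P (n + p)`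
with those of `P n`; all components involved are shorter than `n`. Hence periodicity on
`[q, 2q + p + 2]` propagates to every `n ≥ q` by strong induction through the mex recurrence.
-/
def splitNimSums (ρ : ℕ → ℕ) (s : ℕ) : Set ℕ :=
  {v | ∃ i j : ℕ, 1 ≤ i ∧ i ≤ j ∧ i + j = s ∧ v = ρ i ^^^ ρ j}

theorem grundyOptValues_eq (ρ : ℕ → ℕ) (n : ℕ) :
    grundyOptValues ρ n = {ρ (n - 2), ρ (n - 3)} ∪ splitNimSums ρ (n - 3) :=
  rfl

section Periodic

variable {ρ : ℕ → ℕ} {p q : ℕ}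

theorem splitNimSums_add_period {s : ℕ} (hq : 0 < q) (hper : ∀ m, q ≤ m → m < s → ρ (m + p) = ρ m)
    (hs : 2 * q + p ≤ s) : splitNimSums ρ (s + p) = splitNimSums ρ s := by
  ext v
  constructor
  · rintro ⟨i, j, hi, hij, hsum, rfl⟩
    have hj : ρ j = ρ (j - p) := by
      rw [← hper (j - p) (by omega) (by omega), Nat.sub_add_cancel (by omega)]
    rcases le_total i (j - p) with hle | hle
    · exact ⟨i, j - p, hi, hle, by omega, by rw [hj]⟩
    · exact ⟨j - p, i, by omega, hle, by omega, by rw [hj, Nat.xor_comm]⟩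
  · rintro ⟨i, j, hi, hij, hsum, rfl⟩
    exact ⟨i, j + p, hi, by omega, by omega, by rw [hper j (by omega) (by omega)]⟩

theorem grundyOptValues_add_period {n : ℕ} (hq : 0 < q) (hper : ∀ m, q ≤ m → m < n → ρ (m + p) = ρ m)
    (hn : 2 * q + p + 3 ≤ n) : grundyOptValues ρ (n + p) = grundyOptValues ρ n := by
  rw [grundyOptValues_eq, grundyOptValues_eq, show n + p - 2 = n - 2 + p by omega,
    show n + p - 3 = n - 3 + p by omega, hper (n - 2) (by omega) (by omega),
    hper (n - 3) (by omega) (by omega),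
    splitNimSums_add_period hq (fun m hqm hm => hper m hqm (by omega)) (by omega)]

end Periodic

theorem guy_smith_periodicity_general (ρ : ℕ → ℕ)
    (hrec : ∀ n, 4 ≤ n → ρ n = mex (grundyOptValues ρ n))
    (p q : ℕ) (hq : 0 < q)
    (hper : ∀ n, q ≤ n → n ≤ 2 * q + p + 2 → ρ (n + p) = ρ n) :
    ∀ n, q ≤ n → ρ (n + p) = ρ n := by
  intro n
  induction n using Nat.strong_induction_on with
  | _ n ih =>
    intro hqn
    rcases le_or_gt n (2 * q + p + 2) with hn | hn
    · exact hper n hqn hn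
    · rw [hrec (n + p) (by omega), hrec n (by omega),
        grundyOptValues_add_period hq (fun m hqm hmn => ih m hmn hqm) (by omega)]

theorem guy_smith_periodicity (ρ : ℕ → ℕ)
    (hrec : ∀ n, 4 ≤ n → ρ n = mex (grundyOptValues ρ n))
    (p q : ℕ) (hp : 0 < p) (hq : 0 < q)
    (hper : ∀ n, q ≤ n → n ≤ 2 * q + p + 2 → ρ (n + p) = ρ n) :
    ∀ n, q ≤ n → ρ (n + p) = ρ n :=
  guy_smith_periodicity_general ρ hrec p q hq hper
end
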